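/- arXiv:1002.4733 — 6 statements merged into one kernel-verified Lean document; each statement's English description precedes it below -/
import Mathlib

section
/- Let M be a symmetric positive definite n×n real matrix, let μ : ℝⁿ → (m×n real matrices) assign to each configuration a rank-m constraint matrix, and let Q(q) := M⁻¹μ(q)ᵀ(μ(q)M⁻¹μ(q)ᵀ)⁻¹μ(q). Suppose a sequence of momenta satisfies the GNI update p_{k+1/2} = (Id − 2Q(q_k)ᵀ) p_{k−1/2} for all k (the potential-free case V = 0). Then the kinetic energy ½ p_{k+1/2}ᵀ M⁻¹ p_{k+1/2} is the same for all k; i.e. in the absence of a potential the geometric nonholonomic integrator exactly preserves energy. -/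
/-!
With `B = M⁻¹` and `N = μ(q)`, the matrix `Q = B Nᵀ (N B Nᵀ)⁻¹ N` is idempotent and satisfies
`Q B = B Qᵀ`, i.e. it is a projection that is self-adjoint for the form `pᵀ B p`; the inverse
exists because `N B Nᵀ` is positive definite when `N` has full row rank. Hence `Id − 2Qᵀ` is a
reflection preserving that form, and every step of the integrator conserves `½ pᵀ M⁻¹ p`.
-/

open Matrix

namespace Matrix

variable {m n : Type*} [Fintype m] [Fintype n]

lemma vecMul_injective_of_rank_eq_card {K : Type*} [Field K] {N : Matrix m n K}
    (hN : N.rank = Fintype.card m) : Function.Injective N.vecMul := by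
  rw [vecMul_injective_iff, linearIndependent_iff_card_eq_finrank_span, Set.finrank,
    ← rank_eq_finrank_span_row, hN]

lemma PosDef.mul_mul_transpose_of_rank_eq_card {A : Matrix n n ℝ} (hA : A.PosDef)
    {N : Matrix m n ℝ} (hN : N.rank = Fintype.card m) : (N * A * Nᵀ).PosDef := by
  simpa using hA.mul_mul_conjTranspose_same (vecMul_injective_of_rank_eq_card hN)

lemma dotProduct_mulVec_mulVec_eq_of_transpose_mul_mul_eq {R : Type*} [CommSemiring R]
    {A T : Matrix n n R} (hT : Tᵀ * A * T = A) (v : n → R) :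
    (T *ᵥ v) ⬝ᵥ (A *ᵥ (T *ᵥ v)) = v ⬝ᵥ (A *ᵥ v) := by
  conv_rhs => rw [← hT, Matrix.mul_assoc, ← mulVec_mulVec, dotProduct_mulVec, vecMul_transpose,
    ← mulVec_mulVec]

variable {R : Type*} [CommRing R]

lemma one_sub_two_smul_mul_mul_transpose [DecidableEq n] {B P : Matrix n n R}
    (hPP : P * P = P) (hPB : P * B = B * Pᵀ) :
    (1 - (2 : R) • P) * B * (1 - (2 : R) • P)ᵀ = B := by
  have hPBP : P * B * Pᵀ = P * B := by rw [mul_assoc, ← hPB, ← mul_assoc, hPP]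
  simp only [transpose_sub, transpose_one, transpose_smul, Matrix.sub_mul, Matrix.mul_sub,
    Matrix.one_mul, Matrix.mul_one, Matrix.smul_mul, Matrix.mul_smul]
  rw [hPBP, ← hPB]
  module

variable [DecidableEq m]

/-- The matrix `Q(q)` of the integrator, for `B = M⁻¹` and `N = μ(q)`. -/
noncomputable def constraintProjection (B : Matrix n n R) (N : Matrix m n R) : Matrix n n R :=
  B * Nᵀ * (N * B * Nᵀ)⁻¹ * N

variable {B : Matrix n n R} {N : Matrix m n R}

lemma constraintProjection_mul_self (hS : IsUnit (N * B * Nᵀ).det) :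
    constraintProjection B N * constraintProjection B N = constraintProjection B N := by
  calc _ = B * Nᵀ * ((N * B * Nᵀ)⁻¹ * (N * B * Nᵀ)) * (N * B * Nᵀ)⁻¹ * N := by
          simp only [constraintProjection, Matrix.mul_assoc]
    _ = _ := by rw [nonsing_inv_mul _ hS, Matrix.mul_one, constraintProjection]

lemma constraintProjection_mul_eq_mul_transpose (hB : Bᵀ = B) :
    constraintProjection B N * B = B * (constraintProjection B N)ᵀ := by
  simp only [constraintProjection, transpose_mul, transpose_nonsing_inv, transpose_transpose, hB,
    Matrix.mul_assoc]

end Matrix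

theorem gni_energy_preservation_general {n m : ℕ}
    (M : Matrix (Fin n) (Fin n) ℝ) (hM : M.PosDef)
    (μ : (Fin n → ℝ) → Matrix (Fin m) (Fin n) ℝ) (hμ : ∀ q, (μ q).rank = m)
    (Q : (Fin n → ℝ) → Matrix (Fin n) (Fin n) ℝ)
    (hQ : ∀ q, Q q = M⁻¹ * (μ q)ᵀ * (μ q * M⁻¹ * (μ q)ᵀ)⁻¹ * μ q)
    (q p : ℕ → Fin n → ℝ)
    (hupd : ∀ k, p (k + 1) =
      ((1 : Matrix (Fin n) (Fin n) ℝ) - (2 : ℝ) • (Q (q k))ᵀ).mulVec (p k)) :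
    ∀ k, (1 / 2 : ℝ) * dotProduct (p k) (M⁻¹.mulVec (p k)) =
      (1 / 2 : ℝ) * dotProduct (p 0) (M⁻¹.mulVec (p 0)) := by
  have hstep : ∀ x, ((1 : Matrix (Fin n) (Fin n) ℝ) - (2 : ℝ) • (Q x)ᵀ)ᵀ * M⁻¹ *
      (1 - (2 : ℝ) • (Q x)ᵀ) = M⁻¹ := fun x => by
    have hS : IsUnit (μ x * M⁻¹ * (μ x)ᵀ).det :=
      (hM.inv.mul_mul_transpose_of_rank_eq_card (by simpa using hμ x)).isUnit.map detMonoidHom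
    rw [← transpose_one, ← transpose_smul, ← transpose_sub, transpose_transpose, hQ]
    exact one_sub_two_smul_mul_mul_transpose (constraintProjection_mul_self hS)
      (constraintProjection_mul_eq_mul_transpose hM.inv.isHermitian.eq)
  intro k
  induction k with
  | zero => rfl
  | succ k ih => rw [← ih, hupd k, dotProduct_mulVec_mulVec_eq_of_transpose_mul_mul_eq (hstep _)]

/-- In the potential-free case, the GNI momentum update
`p_{k+1/2} = (Id − 2 Q(q_k)ᵀ) p_{k−1/2}` exactly preserves the kinetic energy
`½ pᵀ M⁻¹ p`. -/
theorem gni_energy_preservation {n m : ℕ}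
    (M : Matrix (Fin n) (Fin n) ℝ) (hM : M.PosDef) (hMsymm : M.IsSymm)
    (μ : (Fin n → ℝ) → Matrix (Fin m) (Fin n) ℝ) (hμ : ∀ q, (μ q).rank = m)
    (Q : (Fin n → ℝ) → Matrix (Fin n) (Fin n) ℝ)
    (hQ : ∀ q, Q q = M⁻¹ * (μ q)ᵀ * (μ q * M⁻¹ * (μ q)ᵀ)⁻¹ * μ q)
    (q p : ℕ → Fin n → ℝ)
    (hupd : ∀ k, p (k + 1) =
      ((1 : Matrix (Fin n) (Fin n) ℝ) - (2 : ℝ) • (Q (q k))ᵀ).mulVec (p k)) :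
    ∀ k, (1 / 2 : ℝ) * dotProduct (p k) (M⁻¹.mulVec (p k)) =
      (1 / 2 : ℝ) * dotProduct (p 0) (M⁻¹.mulVec (p 0)) :=
  gni_energy_preservation_general M hM μ hμ Q hQ q p hupd
end

section
/- Let h > 0, let M be an invertible symmetric n×n real matrix, V : ℝⁿ → ℝ differentiable with gradient V_q, and μ : ℝⁿ → (m×n real matrices). Suppose sequences (q_k) in ℝⁿ and (λ_k) in ℝᵐ satisfy the nonholonomic SHAKE equations q_{k+1} − 2q_k + q_{k−1} = −h²M⁻¹(V_q(q_k) + μ(q_k)ᵀλ_k) and μ(q_k)(q_{k+1} − q_{k−1})/(2h) = 0 for all k ≥ 1. Define p_k := M(q_{k+1} − q_{k−1})/(2h) and p_{k+1/2} := M(q_{k+1} − q_k)/h. Then for all k ≥ 1 the nonholonomic RATTLE equations hold: p_{k+1/2} = p_k − (h/2)(V_q(q_k) + μ(q_k)ᵀλ_k), q_{k+1} = q_k + hM⁻¹p_{k+1/2}, μ(q_k)M⁻¹p_k = 0, p_{k+1} = p_{k+1/2} − (h/2)(V_q(q_{k+1}) + μ(q_{k+1})ᵀλ_{k+1}), and μ(q_{k+1})M⁻¹p_{k+1}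 = 0. -/
/-!
Multiplying the SHAKE second difference `q_{k+1} - 2 q_k + q_{k-1} = -h² M⁻¹ F_k` by `M / (2h)`
gives `-(h/2) F_k`, and both `p_{k+1/2} - p_k` and `p_{k+1} - p_{k+1/2}` are exactly `M / (2h)`
times a second difference of `q`. The RATTLE constraints are the SHAKE ones, since
`M⁻¹ p_k = (q_{k+1} - q_{k-1}) / (2h)`.
-/

open Matrix

namespace Matrix

variable {ι K : Type*} [Fintype ι] [DecidableEq ι] [Field K] {M : Matrix ι ι K}

theorem mulVec_nonsing_inv_mulVec (hM : IsUnit M) (x : ι → K) : M *ᵥ (M⁻¹ *ᵥ x) = x := by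
  rw [mulVec_mulVec, mul_nonsing_inv M ((isUnit_iff_isUnit_det M).mp hM), one_mulVec]

theorem nonsing_inv_mulVec_mulVec (hM : IsUnit M) (x : ι → K) : M⁻¹ *ᵥ (M *ᵥ x) = x := by
  rw [mulVec_mulVec, nonsing_inv_mul M ((isUnit_iff_isUnit_det M).mp hM), one_mulVec]

end Matrix

theorem two_mul_inv_two_mul {K : Type*} [Field K] [NeZero (2 : K)] (h : K) :
    2 * (2 * h)⁻¹ = h⁻¹ := by
  rw [mul_inv, ← mul_assoc, mul_inv_cancel₀ two_ne_zero, one_mul]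

section Momenta

variable {ι K : Type*} [Fintype ι] [Field K]

def centeredMomentum (M : Matrix ι ι K) (h : K) (q : ℕ → ι → K) (k : ℕ) : ι → K :=
  (2 * h)⁻¹ • M *ᵥ (q (k + 1) - q (k - 1))

def halfStepMomentum (M : Matrix ι ι K) (h : K) (q : ℕ → ι → K) (k : ℕ) : ι → K :=
  h⁻¹ • M *ᵥ (q (k + 1) - q k)

variable (M : Matrix ι ι K) (h : K) (q : ℕ → ι → K)

theorem halfStepMomentum_sub_centeredMomentum [NeZero (2 : K)] (k : ℕ) :
    halfStepMomentum M h q k - centeredMomentum M h q k =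
      (2 * h)⁻¹ • M *ᵥ (q (k + 1) - 2 • q k + q (k - 1)) := by
  simp only [halfStepMomentum, centeredMomentum, mulVec_sub, mulVec_add, mulVec_smul,
    ← two_mul_inv_two_mul h]
  module

theorem centeredMomentum_succ_sub_halfStepMomentum [NeZero (2 : K)] (k : ℕ) :
    centeredMomentum M h q (k + 1) - halfStepMomentum M h q k =
      (2 * h)⁻¹ • M *ᵥ (q (k + 2) - 2 • q (k + 1) + q k) := by
  simp only [halfStepMomentum, centeredMomentum, mulVec_sub, mulVec_add, mulVec_smul,
    ← two_mul_inv_two_mul h, Nat.add_sub_cancel]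
  module

variable [DecidableEq ι] {M h q}

theorem inv_mulVec_centeredMomentum (hM : IsUnit M) (k : ℕ) :
    M⁻¹ *ᵥ centeredMomentum M h q k = (2 * h)⁻¹ • (q (k + 1) - q (k - 1)) := by
  rw [centeredMomentum, mulVec_smul, nonsing_inv_mulVec_mulVec hM]

theorem add_smul_inv_mulVec_halfStepMomentum (hM : IsUnit M) (hh : h ≠ 0) (k : ℕ) :
    q k + h • M⁻¹ *ᵥ halfStepMomentum M h q k = q (k + 1) := by
  rw [halfStepMomentum, mulVec_smul, nonsing_inv_mulVec_mulVec hM, smul_smul,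
    mul_inv_cancel₀ hh, one_smul, add_sub_cancel]

theorem smul_mulVec_eq_of_eq_neg_sq_smul_inv_mulVec [NeZero (2 : K)] (hM : IsUnit M)
    (hh : h ≠ 0) {d F : ι → K} (hd : d = -(h ^ 2 • M⁻¹ *ᵥ F)) :
    (2 * h)⁻¹ • M *ᵥ d = -((h / 2) • F) := by
  rw [hd, mulVec_neg, mulVec_smul, mulVec_nonsing_inv_mulVec hM, smul_neg, smul_smul]
  congr 2
  field_simp

theorem halfStepMomentum_eq_of_shake [NeZero (2 : K)] (hM : IsUnit M) (hh : h ≠ 0) {k : ℕ}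
    {F : ι → K} (hshake : q (k + 1) - 2 • q k + q (k - 1) = -(h ^ 2 • M⁻¹ *ᵥ F)) :
    halfStepMomentum M h q k = centeredMomentum M h q k - (h / 2) • F := by
  have h_diff := halfStepMomentum_sub_centeredMomentum M h q k
  rw [smul_mulVec_eq_of_eq_neg_sq_smul_inv_mulVec hM hh hshake, sub_eq_iff_eq_add'] at h_diff
  rw [h_diff, sub_eq_add_neg]

theorem centeredMomentum_succ_eq_of_shake [NeZero (2 : K)] (hM : IsUnit M) (hh : h ≠ 0) {k : ℕ}
    {F : ι → K} (hshake : q (k + 2) - 2 • q (k + 1) + q k = -(h ^ 2 • M⁻¹ *ᵥ F)) :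
    centeredMomentum M h q (k + 1) = halfStepMomentum M h q k - (h / 2) • F := by
  have h_diff := centeredMomentum_succ_sub_halfStepMomentum M h q k
  rw [smul_mulVec_eq_of_eq_neg_sq_smul_inv_mulVec hM hh hshake, sub_eq_iff_eq_add'] at h_diff
  rw [h_diff, sub_eq_add_neg]

end Momenta

theorem nonholonomic_shake_to_rattle_general {n m : ℕ} (h : ℝ) (hh : 0 < h)
    (M : Matrix (Fin n) (Fin n) ℝ) (hMinv : IsUnit M)
    (Vq : (Fin n → ℝ) → (Fin n → ℝ))
    (μ : (Fin n → ℝ) → Matrix (Fin m) (Fin n) ℝ)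
    (q : ℕ → Fin n → ℝ) (lam : ℕ → Fin m → ℝ)
    (hshake : ∀ k, 1 ≤ k →
      q (k + 1) - 2 • q k + q (k - 1) =
        -((h ^ 2) • M⁻¹.mulVec (Vq (q k) + (μ (q k))ᵀ.mulVec (lam k))))
    (hcon : ∀ k, 1 ≤ k →
      (μ (q k)).mulVec ((2 * h)⁻¹ • (q (k + 1) - q (k - 1))) = 0)
    (p : ℕ → Fin n → ℝ) (hp : ∀ k, p k = (2 * h)⁻¹ • M.mulVec (q (k + 1) - q (k - 1)))
    (phalf : ℕ → Fin n → ℝ) (hphalf : ∀ k, phalf k = h⁻¹ • M.mulVec (q (k + 1) - q k)) :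
    ∀ k, 1 ≤ k →
      phalf k = p k - (h / 2) • (Vq (q k) + (μ (q k))ᵀ.mulVec (lam k)) ∧
      q (k + 1) = q k + h • M⁻¹.mulVec (phalf k) ∧
      (μ (q k)).mulVec (M⁻¹.mulVec (p k)) = 0 ∧
      p (k + 1) = phalf k - (h / 2) • (Vq (q (k + 1)) + (μ (q (k + 1)))ᵀ.mulVec (lam (k + 1))) ∧
      (μ (q (k + 1))).mulVec (M⁻¹.mulVec (p (k + 1))) = 0 := by
  intro k hk
  obtain rfl : p = centeredMomentum M h q := funext hp
  obtain rfl : phalf = halfStepMomentum M h q := funext hphalf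
  rw [inv_mulVec_centeredMomentum hMinv, inv_mulVec_centeredMomentum hMinv]
  exact ⟨halfStepMomentum_eq_of_shake hMinv hh.ne' (hshake k hk),
    (add_smul_inv_mulVec_halfStepMomentum hMinv hh.ne' k).symm,
    hcon k hk,
    centeredMomentum_succ_eq_of_shake hMinv hh.ne' (hshake (k + 1) k.succ_pos),
    hcon (k + 1) k.succ_pos⟩

/-- Solutions of the nonholonomic SHAKE equations, rewritten in terms of the
momenta `p_k = M(q_{k+1} − q_{k−1})/(2h)` and `p_{k+1/2} = M(q_{k+1} − q_k)/h`,
satisfy the nonholonomic RATTLE equations. -/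
theorem nonholonomic_shake_to_rattle {n m : ℕ} (h : ℝ) (hh : 0 < h)
    (M : Matrix (Fin n) (Fin n) ℝ) (hMsymm : M.IsSymm) (hMinv : IsUnit M)
    (V : (Fin n → ℝ) → ℝ) (hV : Differentiable ℝ V)
    (Vq : (Fin n → ℝ) → (Fin n → ℝ))
    (hVq : ∀ q v, fderiv ℝ V q v = dotProduct (Vq q) v)
    (μ : (Fin n → ℝ) → Matrix (Fin m) (Fin n) ℝ)
    (q : ℕ → Fin n → ℝ) (lam : ℕ → Fin m → ℝ)
    (hshake : ∀ k, 1 ≤ k →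
      q (k + 1) - 2 • q k + q (k - 1) =
        -((h ^ 2) • M⁻¹.mulVec (Vq (q k) + (μ (q k))ᵀ.mulVec (lam k))))
    (hcon : ∀ k, 1 ≤ k →
      (μ (q k)).mulVec ((2 * h)⁻¹ • (q (k + 1) - q (k - 1))) = 0)
    (p : ℕ → Fin n → ℝ) (hp : ∀ k, p k = (2 * h)⁻¹ • M.mulVec (q (k + 1) - q (k - 1)))
    (phalf : ℕ → Fin n → ℝ) (hphalf : ∀ k, phalf k = h⁻¹ • M.mulVec (q (k + 1) - q k)) :
    ∀ k, 1 ≤ k →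
      phalf k = p k - (h / 2) • (Vq (q k) + (μ (q k))ᵀ.mulVec (lam k)) ∧
      q (k + 1) = q k + h • M⁻¹.mulVec (phalf k) ∧
      (μ (q k)).mulVec (M⁻¹.mulVec (p k)) = 0 ∧
      p (k + 1) = phalf k - (h / 2) • (Vq (q (k + 1)) + (μ (q (k + 1)))ᵀ.mulVec (lam (k + 1))) ∧
      (μ (q (k + 1))).mulVec (M⁻¹.mulVec (p (k + 1))) = 0 :=
  nonholonomic_shake_to_rattle_general h hh M hMinv Vq μ q lam hshake hcon p hp phalf hphalf
end

section
/- Let h > 0, let M be a symmetric positive definite n×n real matrix, μ an m×n real matrix of rank m, Q := M⁻¹μᵀ(μM⁻¹μᵀ)⁻¹μ, P := Id − Q, and let g ∈ ℝⁿ be a fixed vector (the gradient of the potential at q_k). Then for any q_{k−1}, q_k, q_{k+1} ∈ ℝⁿ, the pair of projected GNI equations PᵀM(q_{k+1} − 2q_k + q_{k−1}) = −h²Pᵀg and QᵀM((q_{k+1} − q_{k−1})/(2h)) = 0 holds if and only if q_{k+1} = q_k + (Id − 2M⁻¹QᵀM)(q_k − q_{k−1}) − h²M⁻¹Pᵀg.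 -/
/-!
`Q = B (C B)⁻¹ C` with `B = M⁻¹μᵀ`, `C = μ` is idempotent, so `Qᵀ` and `Pᵀ = 1 - Qᵀ` are
complementary idempotents and a vector is determined by its two projections. Writing
`q_{k+1} - q_{k-1} = (q_{k+1} - 2q_k + q_{k-1}) + 2(q_k - q_{k-1})`, the two projected equations
prescribe both projections of `M(q_{k+1} - 2q_k + q_{k-1})`, namely `-h²Pᵀg` and
`-2QᵀM(q_k - q_{k-1})`; inverting `M` gives the explicit update.
-/

open Matrix

namespace Matrix

variable {R : Type*} [CommRing R] {m n : Type*} [Fintype m] [DecidableEq m] [Fintype n]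

theorem nonsing_inv_mul_self_mul_nonsing_inv (A : Matrix m m R) : A⁻¹ * A * A⁻¹ = A⁻¹ := by
  by_cases hA : IsUnit A.det
  · rw [nonsing_inv_mul A hA, Matrix.one_mul]
  · rw [nonsing_inv_apply_not_isUnit A hA, Matrix.mul_zero]

theorem _root_.IsIdempotentElem.matrix_transpose {E : Matrix n n R} (hE : IsIdempotentElem E) :
    IsIdempotentElem Eᵀ := by
  rw [IsIdempotentElem, ← transpose_mul, hE.eq]

theorem isIdempotentElem_mul_nonsing_inv_mul (B : Matrix n m R) (C : Matrix m n R) :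
    IsIdempotentElem (B * (C * B)⁻¹ * C) :=
  calc B * (C * B)⁻¹ * C * (B * (C * B)⁻¹ * C)
      = B * ((C * B)⁻¹ * (C * B) * (C * B)⁻¹) * C := by simp only [Matrix.mul_assoc]
    _ = B * (C * B)⁻¹ * C := by rw [nonsing_inv_mul_self_mul_nonsing_inv]

variable [DecidableEq n]

theorem mulVec_eq_iff_eq_nonsing_inv_mulVec {A : Matrix n n R}
    (hA : IsUnit A.det) {x y : n → R} : A *ᵥ x = y ↔ x = A⁻¹ *ᵥ y :=
  ⟨fun h => by rw [← h, mulVec_mulVec, nonsing_inv_mul A hA, one_mulVec],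
   fun h => by rw [h, mulVec_mulVec, mul_nonsing_inv A hA, one_mulVec]⟩

theorem mulVec_eq_add_iff_of_isIdempotentElem {E : Matrix n n R} (hE : IsIdempotentElem E)
    (x a b : n → R) :
    ((1 - E) *ᵥ x = (1 - E) *ᵥ a ∧ E *ᵥ x = E *ᵥ b) ↔ x = (1 - E) *ᵥ a + E *ᵥ b := by
  constructor
  · rintro ⟨hcompl, hE_x⟩
    calc x = (1 - E) *ᵥ x + E *ᵥ x := by rw [← add_mulVec, sub_add_cancel, one_mulVec]
      _ = (1 - E) *ᵥ a + E *ᵥ b := by rw [hcompl, hE_x]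
  · rintro rfl
    simp only [mulVec_add, mulVec_mulVec, hE.eq, hE.one_sub.eq, hE.mul_one_sub_self,
      hE.one_sub_mul_self, zero_mulVec, add_zero, zero_add, and_self]

end Matrix

theorem gni_projected_equations_explicit_form_general {n m : ℕ} (h : ℝ) (hh : 0 < h)
    (M : Matrix (Fin n) (Fin n) ℝ) (hM : M.PosDef)
    (μ : Matrix (Fin m) (Fin n) ℝ)
    (Q P : Matrix (Fin n) (Fin n) ℝ)
    (hQ : Q = M⁻¹ * μᵀ * (μ * M⁻¹ * μᵀ)⁻¹ * μ) (hP : P = 1 - Q)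
    (g : Fin n → ℝ) :
    ∀ qkm qk qkp : Fin n → ℝ,
      (Pᵀ.mulVec (M.mulVec (qkp - 2 • qk + qkm)) = -((h ^ 2) • Pᵀ.mulVec g) ∧
        Qᵀ.mulVec (M.mulVec ((2 * h)⁻¹ • (qkp - qkm))) = 0) ↔
      qkp = qk + ((1 : Matrix (Fin n) (Fin n) ℝ) - (2 : ℝ) • (M⁻¹ * Qᵀ * M)).mulVec (qk - qkm)
              - (h ^ 2) • M⁻¹.mulVec (Pᵀ.mulVec g) := by
  intro qkm qk qkp
  have hQ_idem : IsIdempotentElem Qᵀ := by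
    rw [hQ, Matrix.mul_assoc μ M⁻¹]
    exact (isIdempotentElem_mul_nonsing_inv_mul _ μ).matrix_transpose
  have hPt : Pᵀ = 1 - Qᵀ := by rw [hP, transpose_sub, transpose_one]
  have hM_det : IsUnit M.det := (isUnit_iff_isUnit_det M).mp hM.isUnit
  have h2h : (2 * h)⁻¹ ≠ 0 := by positivity
  have hvel : qkp - qkm = (qkp - 2 • qk + qkm) + (2 : ℝ) • (qk - qkm) := by module
  set v := qkp - 2 • qk + qkm
  set u := qk - qkm
  calc _ ↔ (1 - Qᵀ) *ᵥ (M *ᵥ v) = (1 - Qᵀ) *ᵥ (-(h ^ 2) • g) ∧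
        Qᵀ *ᵥ (M *ᵥ v) = Qᵀ *ᵥ (-(2 : ℝ) • M *ᵥ u) := by
        refine and_congr ?_ ?_
        · rw [hPt, neg_smul, mulVec_neg, mulVec_smul]
        · rw [mulVec_smul, mulVec_smul, smul_eq_zero, or_iff_right h2h, hvel, mulVec_add,
            mulVec_add, mulVec_smul, mulVec_smul, neg_smul, mulVec_neg, mulVec_smul,
            eq_neg_iff_add_eq_zero]
    _ ↔ M *ᵥ v = (1 - Qᵀ) *ᵥ (-(h ^ 2) • g) + Qᵀ *ᵥ (-(2 : ℝ) • M *ᵥ u) :=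
      mulVec_eq_add_iff_of_isIdempotentElem hQ_idem _ _ _
    _ ↔ _ := by
      rw [mulVec_eq_iff_eq_nonsing_inv_mulVec hM_det, hPt]
      simp only [v, mulVec_add, mulVec_smul, sub_mulVec, smul_mulVec, one_mulVec, mulVec_mulVec,
        Matrix.mul_assoc]
      constructor <;> intro heq <;> linear_combination (norm := module) heq

/-- The two projected GNI equations at `q_k` are together equivalent to the single
explicit update
`q_{k+1} = q_k + (Id − 2M⁻¹QᵀM)(q_k − q_{k−1}) − h²M⁻¹Pᵀg`. -/
theorem gni_projected_equations_explicit_form {n m : ℕ} (h : ℝ) (hh : 0 < h)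
    (M : Matrix (Fin n) (Fin n) ℝ) (hM : M.PosDef) (hMsymm : M.IsSymm)
    (μ : Matrix (Fin m) (Fin n) ℝ) (hμ : μ.rank = m)
    (Q P : Matrix (Fin n) (Fin n) ℝ)
    (hQ : Q = M⁻¹ * μᵀ * (μ * M⁻¹ * μᵀ)⁻¹ * μ) (hP : P = 1 - Q)
    (g : Fin n → ℝ) :
    ∀ qkm qk qkp : Fin n → ℝ,
      (Pᵀ.mulVec (M.mulVec (qkp - 2 • qk + qkm)) = -((h ^ 2) • Pᵀ.mulVec g) ∧
        Qᵀ.mulVec (M.mulVec ((2 * h)⁻¹ • (qkp - qkm))) = 0) ↔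
      qkp = qk + ((1 : Matrix (Fin n) (Fin n) ℝ) - (2 : ℝ) • (M⁻¹ * Qᵀ * M)).mulVec (qk - qkm)
              - (h ^ 2) • M⁻¹.mulVec (Pᵀ.mulVec g) :=
  gni_projected_equations_explicit_form_general h hh M hM μ Q P hQ hP g
end

section
/- Let M be a symmetric positive definite n×n real matrix, μ : ℝⁿ → (m×n real matrices) with each μ(q) of rank m, and Q(q) := M⁻¹μ(q)ᵀ(μ(q)M⁻¹μ(q)ᵀ)⁻¹μ(q), P(q) := Id − Q(q). Let A be an n×n real matrix such that μ(q)(Aq) = 0 for all q ∈ ℝⁿ (A generates a horizontal symmetry), and let L_d : ℝⁿ × ℝⁿ → ℝ be differentiable and invariant under the one-parameter group generated by A, i.e. L_d(e^{tA}q₀, e^{tA}q₁) = L_d(q₀, q₁) for all t ∈ ℝ and q₀, q₁ ∈ ℝⁿ. If a sequence (q_k) satisfies the GNI equation P(q_k)ᵀ(D₁L_d(q_k, q_{k+1}) + D₂L_d(q_{k−1}, q_k)) = 0 for all k, then the discrete nonholonomic momentum ⟨D₂L_d(q_{k−1}, q_k), A q_k⟩ takes the same value for all k. -/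
/-!
Differentiating the invariance `L_d(e^{tA}q₀, e^{tA}q₁) = L_d(q₀, q₁)` at `t = 0` gives the
discrete Noether identity `⟨D₁L_d(q₀,q₁), Aq₀⟩ + ⟨D₂L_d(q₀,q₁), Aq₁⟩ = 0`. Horizontality means
`Q(q)(Aq) = 0`, so `Aq = P(q)(Aq)`, and pairing the GNI equation at `q_k` with `Aq_k` gives
`⟨D₁L_d(q_k,q_{k+1}), Aq_k⟩ = -⟨D₂L_d(q_{k-1},q_k), Aq_k⟩`. Together the momentum at step `k+1`
equals the momentum at step `k`.
-/

open Matrix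

section ExpFlow

attribute [local instance] Matrix.linftyOpNormedAddCommGroup Matrix.linftyOpNormedSpace
  Matrix.linftyOpNormedRing Matrix.linftyOpNormedAlgebra

theorem hasDerivAt_exp_smul_mulVec {𝕜 ι : Type*} [RCLike 𝕜] [Fintype ι] [DecidableEq ι]
    (A : Matrix ι ι 𝕜) (q : ι → 𝕜) (t : 𝕜) :
    HasDerivAt (fun s : 𝕜 => NormedSpace.exp (s • A) *ᵥ q)
      (NormedSpace.exp (t • A) *ᵥ (A *ᵥ q)) t := by
  have hB := (LinearMap.toContinuousLinearMap ((mulVecBilin 𝕜 𝕜).flip q)).hasFDerivAt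
    |>.comp_hasDerivAt t (hasDerivAt_exp_smul_const A t)
  exact hB.congr_deriv (mulVec_mulVec _ _ _).symm

end ExpFlow

theorem fderiv_apply_prod_eq_add {𝕜 E F G : Type*} [NontriviallyNormedField 𝕜]
    [NormedAddCommGroup E] [NormedSpace 𝕜 E] [NormedAddCommGroup F] [NormedSpace 𝕜 F]
    [NormedAddCommGroup G] [NormedSpace 𝕜 G] {f : E × F → G} {x : E} {y : F}
    (hf : DifferentiableAt 𝕜 f (x, y)) (u : E) (v : F) :
    fderiv 𝕜 f (x, y) (u, v) =
      fderiv 𝕜 (fun x' => f (x', y)) x u + fderiv 𝕜 (fun y' => f (x, y')) y v := by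
  have hx : HasFDerivAt (fun x' => f (x', y)) _ x :=
    hf.hasFDerivAt.comp x (hasFDerivAt_prodMk_left x y)
  have hy : HasFDerivAt (fun y' => f (x, y')) _ y :=
    hf.hasFDerivAt.comp y (hasFDerivAt_prodMk_right x y)
  rw [hx.fderiv, hy.fderiv, ContinuousLinearMap.comp_apply, ContinuousLinearMap.comp_apply,
    ← map_add]
  simp

theorem fderiv_apply_mulVec_eq_zero_of_exp_invariant {𝕜 ι G : Type*} [RCLike 𝕜] [Fintype ι]
    [DecidableEq ι] [NormedAddCommGroup G] [NormedSpace 𝕜 G] {A : Matrix ι ι 𝕜}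
    {L : (ι → 𝕜) × (ι → 𝕜) → G}
    (hinv : ∀ (t : 𝕜) (q₀ q₁ : ι → 𝕜),
      L (NormedSpace.exp (t • A) *ᵥ q₀, NormedSpace.exp (t • A) *ᵥ q₁) = L (q₀, q₁))
    {q₀ q₁ : ι → 𝕜} (hL : DifferentiableAt 𝕜 L (q₀, q₁)) :
    fderiv 𝕜 L (q₀, q₁) (A *ᵥ q₀, A *ᵥ q₁) = 0 := by
  have hflow := (hasDerivAt_exp_smul_mulVec A q₀ 0).prodMk (hasDerivAt_exp_smul_mulVec A q₁ 0)
  simp only [zero_smul, NormedSpace.exp_zero, one_mulVec] at hflow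
  have hcomp := hL.hasFDerivAt.comp_hasDerivAt_of_eq 0 hflow (by simp)
  simp only [Function.comp_def, hinv] at hcomp
  exact hcomp.unique (hasDerivAt_const 0 _)

theorem dotProduct_eq_zero_of_transpose_one_sub_mulVec {ι R : Type*} [Fintype ι] [DecidableEq ι]
    [CommRing R] {Q : Matrix ι ι R} {w v : ι → R} (hw : (1 - Q)ᵀ *ᵥ w = 0) (hv : Q *ᵥ v = 0) :
    w ⬝ᵥ v = 0 :=
  calc w ⬝ᵥ v = w ⬝ᵥ ((1 - Q) *ᵥ v) := by rw [sub_mulVec, one_mulVec, hv, sub_zero]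
    _ = ((1 - Q)ᵀ *ᵥ w) ⬝ᵥ v := by rw [dotProduct_mulVec, mulVec_transpose]
    _ = 0 := by rw [hw, zero_dotProduct]

theorem gni_momentum_preservation_general {n m : ℕ}
    (M : Matrix (Fin n) (Fin n) ℝ)
    (μ : (Fin n → ℝ) → Matrix (Fin m) (Fin n) ℝ)
    (Q P : (Fin n → ℝ) → Matrix (Fin n) (Fin n) ℝ)
    (hQ : ∀ q, Q q = M⁻¹ * (μ q)ᵀ * (μ q * M⁻¹ * (μ q)ᵀ)⁻¹ * μ q)
    (hP : ∀ q, P q = 1 - Q q)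
    (A : Matrix (Fin n) (Fin n) ℝ)
    (hhoriz : ∀ q : Fin n → ℝ, (μ q).mulVec (A.mulVec q) = 0)
    (Ld : (Fin n → ℝ) × (Fin n → ℝ) → ℝ) (hLd : Differentiable ℝ Ld)
    (hinv : ∀ (t : ℝ) (q₀ q₁ : Fin n → ℝ),
      Ld ((NormedSpace.exp (t • A)).mulVec q₀, (NormedSpace.exp (t • A)).mulVec q₁) =
        Ld (q₀, q₁))
    (D1Ld D2Ld : (Fin n → ℝ) → (Fin n → ℝ) → (Fin n → ℝ))
    (hD1 : ∀ q₀ q₁ v, fderiv ℝ (fun x => Ld (x, q₁)) q₀ v = dotProduct (D1Ld q₀ q₁) v)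
    (hD2 : ∀ q₀ q₁ v, fderiv ℝ (fun y => Ld (q₀, y)) q₁ v = dotProduct (D2Ld q₀ q₁) v)
    (q : ℕ → Fin n → ℝ)
    (hgni : ∀ k : ℕ,
      (P (q (k + 1)))ᵀ.mulVec (D1Ld (q (k + 1)) (q (k + 2)) + D2Ld (q k) (q (k + 1))) = 0) :
    ∀ k : ℕ, dotProduct (D2Ld (q k) (q (k + 1))) (A.mulVec (q (k + 1))) =
      dotProduct (D2Ld (q 0) (q 1)) (A.mulVec (q 1)) := by
  have noether : ∀ q₀ q₁, D1Ld q₀ q₁ ⬝ᵥ (A *ᵥ q₀) + D2Ld q₀ q₁ ⬝ᵥ (A *ᵥ q₁) = 0 := by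
    intro q₀ q₁
    rw [← hD1, ← hD2, ← fderiv_apply_prod_eq_add (hLd _)]
    exact fderiv_apply_mulVec_eq_zero_of_exp_invariant hinv (hLd _)
  have hQA : ∀ p, Q p *ᵥ (A *ᵥ p) = 0 := fun p => by
    rw [hQ, ← mulVec_mulVec, hhoriz, mulVec_zero]
  have step : ∀ k, D2Ld (q (k + 1)) (q (k + 2)) ⬝ᵥ (A *ᵥ q (k + 2)) =
      D2Ld (q k) (q (k + 1)) ⬝ᵥ (A *ᵥ q (k + 1)) := fun k => by
    have hgni_perp := dotProduct_eq_zero_of_transpose_one_sub_mulVec (hP _ ▸ hgni k) (hQA _)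
    rw [add_dotProduct] at hgni_perp
    linarith [noether (q (k + 1)) (q (k + 2))]
  intro k
  induction k with
  | zero => rfl
  | succ k ih => exact (step k).trans ih

/-- If `A` generates a horizontal symmetry (`μ(q)(Aq) = 0` for all `q`) and the
discrete Lagrangian `L_d` is invariant under the flow `e^{tA}`, then the
discrete nonholonomic momentum `⟨D₂L_d(q_{k−1},q_k), A q_k⟩` is preserved by the
GNI equations. -/
theorem gni_momentum_preservation {n m : ℕ}
    (M : Matrix (Fin n) (Fin n) ℝ) (hM : M.PosDef) (hMsymm : M.IsSymm)
    (μ : (Fin n → ℝ) → Matrix (Fin m) (Fin n) ℝ) (hμrank : ∀ q, (μ q).rank = m)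
    (Q P : (Fin n → ℝ) → Matrix (Fin n) (Fin n) ℝ)
    (hQ : ∀ q, Q q = M⁻¹ * (μ q)ᵀ * (μ q * M⁻¹ * (μ q)ᵀ)⁻¹ * μ q)
    (hP : ∀ q, P q = 1 - Q q)
    (A : Matrix (Fin n) (Fin n) ℝ)
    (hhoriz : ∀ q : Fin n → ℝ, (μ q).mulVec (A.mulVec q) = 0)
    (Ld : (Fin n → ℝ) × (Fin n → ℝ) → ℝ) (hLd : Differentiable ℝ Ld)
    (hinv : ∀ (t : ℝ) (q₀ q₁ : Fin n → ℝ),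
      Ld ((NormedSpace.exp (t • A)).mulVec q₀, (NormedSpace.exp (t • A)).mulVec q₁) =
        Ld (q₀, q₁))
    (D1Ld D2Ld : (Fin n → ℝ) → (Fin n → ℝ) → (Fin n → ℝ))
    (hD1 : ∀ q₀ q₁ v, fderiv ℝ (fun x => Ld (x, q₁)) q₀ v = dotProduct (D1Ld q₀ q₁) v)
    (hD2 : ∀ q₀ q₁ v, fderiv ℝ (fun y => Ld (q₀, y)) q₁ v = dotProduct (D2Ld q₀ q₁) v)
    (q : ℕ → Fin n → ℝ)
    (hgni : ∀ k : ℕ,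
      (P (q (k + 1)))ᵀ.mulVec (D1Ld (q (k + 1)) (q (k + 2)) + D2Ld (q k) (q (k + 1))) = 0) :
    ∀ k : ℕ, dotProduct (D2Ld (q k) (q (k + 1))) (A.mulVec (q (k + 1))) =
      dotProduct (D2Ld (q 0) (q 1)) (A.mulVec (q 1)) :=
  gni_momentum_preservation_general M μ Q P hQ hP A hhoriz Ld hLd hinv D1Ld D2Ld hD1 hD2 q hgni
end

section
/- Let I, m, a be real numbers with I > 0, m > 0, and set I' := I + a²m. For any θ ∈ ℝ and any (vθ, vx, vy) ∈ ℝ³, define vθ' := (1 − 2a²m/I')vθ + (am/I')(−2 sin θ · vx + 2 cos θ · vy), vx' := −(2aI/I') sin θ · vθ + (1 − (2I/I') sin²θ) vx + (2I/I') sin θ cos θ · vy, and vy' := (2aI/I') cos θ · vθ + (2I/I') sin θ cos θ · vx + (1 − (2I/I') cos²θ) vy. Then I(vθ')² + m(vx')² + m(vy')² = I vθ² + m vx² + m vy²; i.e. the explicit GNI velocity update for the Chaplygin sleigh exactly preserves the kinetic energy. -/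
open Real

/-!
With `σ = a vθ + sin θ vx - cos θ vy` the constraint violation and `D = I + a² m`, the update
is `v ↦ v - (2σ / D) u` for `u = (a m, I sin θ, -I cos θ)`, a multiple of `M⁻¹c` where
`c = (a, sin θ, -cos θ)` is the constraint covector: a reflection across `c · v = 0` that is
orthogonal for the mass metric. Expanding the square, the energy changes by
`-(2σ / D) (2 ⟨u, v⟩_M - (2σ / D) ⟨u, u⟩_M)`, and `⟨u, v⟩_M = I m σ`, `⟨u, u⟩_M = I m D` by
`sin² θ + cos² θ = 1`, so the change vanishes. (If `D = 0`, then `2σ / D = 0` in Lean and the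
update is the identity.)
-/

theorem Finset.sum_mul_sub_mul_sq {ι R : Type*} [CommRing R] (s : Finset ι) (w u v : ι → R)
    (κ : R) :
    ∑ i ∈ s, w i * (v i - κ * u i) ^ 2 =
      ∑ i ∈ s, w i * v i ^ 2 -
        κ * (2 * ∑ i ∈ s, w i * u i * v i - κ * ∑ i ∈ s, w i * u i ^ 2) := by
  simp only [Finset.mul_sum, ← Finset.sum_sub_distrib]
  exact Finset.sum_congr rfl fun i _ ↦ by ring

theorem div_mul_sub_div_mul_self_eq_zero {K : Type*} [Field K] (x y : K) :
    x / y * (x - x / y * y) = 0 := by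
  rcases eq_or_ne y 0 with rfl | hy
  · simp
  · simp [div_mul_cancel₀ x hy]

theorem chaplygin_sleigh_gni_energy_general (I m a : ℝ)
    (θ vθ vx vy : ℝ) :
    (I * ((1 - 2 * a ^ 2 * m / (I + a ^ 2 * m)) * vθ +
        (a * m / (I + a ^ 2 * m)) * (-2 * sin θ * vx + 2 * cos θ * vy)) ^ 2 +
      m * (-(2 * a * I / (I + a ^ 2 * m)) * sin θ * vθ +
        (1 - (2 * I / (I + a ^ 2 * m)) * sin θ ^ 2) * vx +
        (2 * I / (I + a ^ 2 * m)) * sin θ * cos θ * vy) ^ 2 +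
      m * ((2 * a * I / (I + a ^ 2 * m)) * cos θ * vθ +
        (2 * I / (I + a ^ 2 * m)) * sin θ * cos θ * vx +
        (1 - (2 * I / (I + a ^ 2 * m)) * cos θ ^ 2) * vy) ^ 2) =
    I * vθ ^ 2 + m * vx ^ 2 + m * vy ^ 2 := by
  set D := I + a ^ 2 * m
  set σ := a * vθ + sin θ * vx - cos θ * vy
  let w : Fin 3 → ℝ := ![I, m, m]
  let u : Fin 3 → ℝ := ![a * m, I * sin θ, -(I * cos θ)]
  let v : Fin 3 → ℝ := ![vθ, vx, vy]
  have hσ : ∑ i, w i * u i * v i = I * m * σ := by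
    simp only [Fin.sum_univ_three, w, u, v, σ, Matrix.cons_val]
    ring
  have hD : ∑ i, w i * u i ^ 2 = I * m * D := by
    simp only [Fin.sum_univ_three, w, u, D, Matrix.cons_val]
    linear_combination I ^ 2 * m * sin_sq_add_cos_sq θ
  calc _ = ∑ i, w i * (v i - 2 * σ / D * u i) ^ 2 := by
        simp only [Fin.sum_univ_three, w, u, v, σ, Matrix.cons_val]
        ring
    _ = ∑ i, w i * v i ^ 2 - I * m * (2 * σ / D * (2 * σ - 2 * σ / D * D)) := by
        rw [Finset.sum_mul_sub_mul_sq, hσ, hD]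
        ring
    _ = I * vθ ^ 2 + m * vx ^ 2 + m * vy ^ 2 := by
        simp only [div_mul_sub_div_mul_self_eq_zero, Fin.sum_univ_three, w, v, Matrix.cons_val]
        ring

/-- The explicit GNI velocity update for the Chaplygin sleigh exactly preserves
the kinetic energy `½Ivθ² + ½m(vx² + vy²)` (here stated without the ½ factor). -/
theorem chaplygin_sleigh_gni_energy (I m a : ℝ) (hI : 0 < I) (hm : 0 < m)
    (θ vθ vx vy : ℝ) :
    (I * ((1 - 2 * a ^ 2 * m / (I + a ^ 2 * m)) * vθ +
        (a * m / (I + a ^ 2 * m)) * (-2 * sin θ * vx + 2 * cos θ * vy)) ^ 2 +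
      m * (-(2 * a * I / (I + a ^ 2 * m)) * sin θ * vθ +
        (1 - (2 * I / (I + a ^ 2 * m)) * sin θ ^ 2) * vx +
        (2 * I / (I + a ^ 2 * m)) * sin θ * cos θ * vy) ^ 2 +
      m * ((2 * a * I / (I + a ^ 2 * m)) * cos θ * vθ +
        (2 * I / (I + a ^ 2 * m)) * sin θ * cos θ * vx +
        (1 - (2 * I / (I + a ^ 2 * m)) * cos θ ^ 2) * vy) ^ 2) =
    I * vθ ^ 2 + m * vx ^ 2 + m * vy ^ 2 :=
  chaplygin_sleigh_gni_energy_general I m a θ vθ vx vy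
end

section
/- Let I, m, a be real numbers with I > 0, m > 0. Suppose θ, x, y : ℝ → ℝ are twice differentiable and λ : ℝ → ℝ satisfies the Chaplygin sleigh Lagrange–d'Alembert equations Iθ̈ = λa, mẍ = λ sin θ, mÿ = −λ cos θ, together with the constraint aθ̇ + sin θ ẋ − cos θ ẏ = 0 for all t. Define the nonholonomic momenta p₁ := (I + a²m)θ̇ and p₂ := m(cos θ ẋ + sin θ ẏ). Then for all t, ṗ₁ = −(a/(I + a²m)) p₁ p₂ and ṗ₂ = (ma/(I + a²m)²) p₁². -/
open Real

/-!
Differentiating the constraint `a θ̇ + sin θ ẋ − cos θ ẏ = 0` and inserting `m ẍ = λ sin θ`,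
`m ÿ = −λ cos θ` eliminates the multiplier: `λ = −m (a θ̈ + θ̇ v)`, where
`v = cos θ ẋ + sin θ ẏ`. With `I θ̈ = λ a` this gives `(I + a²m) θ̈ = −m a θ̇ v`. For the forward
momentum the reaction force is orthogonal to the skate, so `m v̇ = m θ̇ (cos θ ẏ − sin θ ẋ)`,
and the constraint turns the lateral factor into `a θ̇`.
-/

section Rotation

variable {θ u w : ℝ → ℝ} {θ' u' w' t : ℝ}

theorem hasDerivAt_cos_mul_add_sin_mul (hθ : HasDerivAt θ θ' t) (hu : HasDerivAt u u' t)
    (hw : HasDerivAt w w' t) :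
    HasDerivAt (fun s => cos (θ s) * u s + sin (θ s) * w s)
      (θ' * (cos (θ t) * w t - sin (θ t) * u t) + (cos (θ t) * u' + sin (θ t) * w')) t := by
  refine ((hθ.cos.mul hu).add (hθ.sin.mul hw)).congr_deriv ?_
  ring

theorem hasDerivAt_sin_mul_sub_cos_mul (hθ : HasDerivAt θ θ' t) (hu : HasDerivAt u u' t)
    (hw : HasDerivAt w w' t) :
    HasDerivAt (fun s => sin (θ s) * u s - cos (θ s) * w s)
      (θ' * (cos (θ t) * u t + sin (θ t) * w t) + (sin (θ t) * u' - cos (θ t) * w')) t := by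
  refine ((hθ.sin.mul hu).sub (hθ.cos.mul hw)).congr_deriv ?_
  ring

end Rotation

section ChaplyginSleigh

variable {θ x y lam : ℝ → ℝ} {I m a : ℝ}

theorem chaplygin_constraint_deriv_eq_zero
    (hθ : Differentiable ℝ θ) (hθ' : Differentiable ℝ (deriv θ))
    (hx' : Differentiable ℝ (deriv x)) (hy' : Differentiable ℝ (deriv y))
    (hcon : ∀ t, a * deriv θ t + sin (θ t) * deriv x t - cos (θ t) * deriv y t = 0) (t : ℝ) :
    a * deriv (deriv θ) t + deriv θ t * (cos (θ t) * deriv x t + sin (θ t) * deriv y t)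
      + (sin (θ t) * deriv (deriv x) t - cos (θ t) * deriv (deriv y) t) = 0 := by
  have hderiv : HasDerivAt
      (fun s => a * deriv θ s + (sin (θ s) * deriv x s - cos (θ s) * deriv y s)) _ t :=
    ((hθ' t).hasDerivAt.const_mul a).add (hasDerivAt_sin_mul_sub_cos_mul (hθ t).hasDerivAt
      (hx' t).hasDerivAt (hy' t).hasDerivAt)
  have hzero : (fun s => a * deriv θ s + (sin (θ s) * deriv x s - cos (θ s) * deriv y s))
      = fun _ => 0 := funext fun s => by linarith [hcon s]
  rw [hzero] at hderiv
  linarith [hderiv.unique (hasDerivAt_const t 0)]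

theorem chaplygin_hasDerivAt_angular_momentum
    (hθ : Differentiable ℝ θ) (hθ' : Differentiable ℝ (deriv θ))
    (hx' : Differentiable ℝ (deriv x)) (hy' : Differentiable ℝ (deriv y))
    (heqθ : ∀ t, I * deriv (deriv θ) t = lam t * a)
    (heqx : ∀ t, m * deriv (deriv x) t = lam t * sin (θ t))
    (heqy : ∀ t, m * deriv (deriv y) t = -(lam t * cos (θ t)))
    (hcon : ∀ t, a * deriv θ t + sin (θ t) * deriv x t - cos (θ t) * deriv y t = 0) (t : ℝ) :
    HasDerivAt (fun s => (I + a ^ 2 * m) * deriv θ s)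
      (-(m * a) * deriv θ t * (cos (θ t) * deriv x t + sin (θ t) * deriv y t)) t := by
  refine ((hθ' t).hasDerivAt.const_mul (I + a ^ 2 * m)).congr_deriv ?_
  linear_combination m * a * chaplygin_constraint_deriv_eq_zero hθ hθ' hx' hy' hcon t
    + heqθ t - a * sin (θ t) * heqx t + a * cos (θ t) * heqy t
    - a * lam t * sin_sq_add_cos_sq (θ t)

theorem chaplygin_hasDerivAt_forward_momentum
    (hθ : Differentiable ℝ θ) (hx' : Differentiable ℝ (deriv x)) (hy' : Differentiable ℝ (deriv y))
    (heqx : ∀ t, m * deriv (deriv x) t = lam t * sin (θ t))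
    (heqy : ∀ t, m * deriv (deriv y) t = -(lam t * cos (θ t)))
    (hcon : ∀ t, a * deriv θ t + sin (θ t) * deriv x t - cos (θ t) * deriv y t = 0) (t : ℝ) :
    HasDerivAt (fun s => m * (cos (θ s) * deriv x s + sin (θ s) * deriv y s))
      (m * a * deriv θ t ^ 2) t := by
  refine ((hasDerivAt_cos_mul_add_sin_mul (hθ t).hasDerivAt (hx' t).hasDerivAt
    (hy' t).hasDerivAt).const_mul m).congr_deriv ?_
  linear_combination -(m * deriv θ t) * hcon t + cos (θ t) * heqx t + sin (θ t) * heqy t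

end ChaplyginSleigh

theorem chaplygin_sleigh_momentum_equations_general (I m a : ℝ) (hI : 0 < I) (hm : 0 < m)
    (θ x y lam : ℝ → ℝ)
    (hθ : Differentiable ℝ θ) (hθ' : Differentiable ℝ (deriv θ))
    (hx' : Differentiable ℝ (deriv x)) (hy' : Differentiable ℝ (deriv y))
    (heqθ : ∀ t, I * deriv (deriv θ) t = lam t * a)
    (heqx : ∀ t, m * deriv (deriv x) t = lam t * sin (θ t))
    (heqy : ∀ t, m * deriv (deriv y) t = -(lam t * cos (θ t)))
    (hcon : ∀ t, a * deriv θ t + sin (θ t) * deriv x t - cos (θ t) * deriv y t = 0)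
    (p₁ p₂ : ℝ → ℝ)
    (hp₁ : ∀ t, p₁ t = (I + a ^ 2 * m) * deriv θ t)
    (hp₂ : ∀ t, p₂ t = m * (cos (θ t) * deriv x t + sin (θ t) * deriv y t)) :
    ∀ t, deriv p₁ t = -(a / (I + a ^ 2 * m)) * p₁ t * p₂ t ∧
      deriv p₂ t = (m * a / (I + a ^ 2 * m) ^ 2) * p₁ t ^ 2 := by
  intro t
  have hK : I + a ^ 2 * m ≠ 0 := by positivity
  obtain rfl : p₁ = fun s => (I + a ^ 2 * m) * deriv θ s := funext hp₁
  obtain rfl : p₂ = fun s => m * (cos (θ s) * deriv x s + sin (θ s) * deriv y s) := funext hp₂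
  rw [(chaplygin_hasDerivAt_angular_momentum hθ hθ' hx' hy' heqθ heqx heqy hcon t).deriv,
    (chaplygin_hasDerivAt_forward_momentum hθ hx' hy' heqx heqy hcon t).deriv]
  constructor <;> field_simp

/-- For solutions of the Chaplygin sleigh Lagrange–d'Alembert equations with the
nonholonomic constraint, the momenta `p₁ = (I + a²m)θ̇` and
`p₂ = m(cos θ ẋ + sin θ ẏ)` satisfy `ṗ₁ = −(a/(I+a²m)) p₁ p₂` and
`ṗ₂ = (ma/(I+a²m)²) p₁²`. -/
theorem chaplygin_sleigh_momentum_equations (I m a : ℝ) (hI : 0 < I) (hm : 0 < m)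
    (θ x y lam : ℝ → ℝ)
    (hθ : Differentiable ℝ θ) (hθ' : Differentiable ℝ (deriv θ))
    (hx : Differentiable ℝ x) (hx' : Differentiable ℝ (deriv x))
    (hy : Differentiable ℝ y) (hy' : Differentiable ℝ (deriv y))
    (heqθ : ∀ t, I * deriv (deriv θ) t = lam t * a)
    (heqx : ∀ t, m * deriv (deriv x) t = lam t * sin (θ t))
    (heqy : ∀ t, m * deriv (deriv y) t = -(lam t * cos (θ t)))
    (hcon : ∀ t, a * deriv θ t + sin (θ t) * deriv x t - cos (θ t) * deriv y t = 0)
    (p₁ p₂ : ℝ → ℝ)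
    (hp₁ : ∀ t, p₁ t = (I + a ^ 2 * m) * deriv θ t)
    (hp₂ : ∀ t, p₂ t = m * (cos (θ t) * deriv x t + sin (θ t) * deriv y t)) :
    ∀ t, deriv p₁ t = -(a / (I + a ^ 2 * m)) * p₁ t * p₂ t ∧
      deriv p₂ t = (m * a / (I + a ^ 2 * m) ^ 2) * p₁ t ^ 2 :=
  chaplygin_sleigh_momentum_equations_general I m a hI hm θ x y lam hθ hθ' hx' hy' heqθ heqx heqy
    hcon p₁ p₂ hp₁ hp₂
end
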